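/- arXiv:0809.4325 — 2 statements merged into one kernel-verified Lean document; each statement's English description precedes it below -/
import Mathlib

section
/- For every j ∈ {1,…,c} and every T > 0, the simulation time s_j satisfies T ≤ s_j < T + c·τ_j, where τ_j = 1/w_j. -/
/-! Multiplying by `w j`, the simulation time becomes `s j * w j = ∑ i, ⌈x i⌉` with
`x i = w i * w j * T / W`, and the `x i` are proportional shares of `w j * T`, so they sum to it.
Each ceiling exceeds its argument by less than `1`, which gives both bounds after dividing
by `w j` again. -/

namespace Finset

variable {ι K : Type*} (s : Finset ι)

theorem sum_mul_div_sum_self [Field K] (w : ι → K) (a : K) (hw : ∑ i ∈ s, w i ≠ 0) :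
    ∑ i ∈ s, w i * a / ∑ i ∈ s, w i = a := by
  rw [← sum_div, ← sum_mul, mul_div_cancel_left₀ _ hw]

variable [Field K] [LinearOrder K] [IsStrictOrderedRing K] [FloorRing K] (x : ι → K)

theorem sum_le_sum_ceil : ∑ i ∈ s, x i ≤ ∑ i ∈ s, (⌈x i⌉ : K) :=
  sum_le_sum fun i _ => Int.le_ceil (x i)

theorem sum_ceil_lt_sum_add_card (hs : s.Nonempty) :
    ∑ i ∈ s, (⌈x i⌉ : K) < ∑ i ∈ s, x i + #s := by
  calc ∑ i ∈ s, (⌈x i⌉ : K) < ∑ i ∈ s, (x i + 1) :=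
        sum_lt_sum_of_nonempty hs fun i _ => Int.ceil_lt_add_one (x i)
    _ = ∑ i ∈ s, x i + #s := by simp [sum_add_distrib]

end Finset

theorem simulation_time_bounds_general
    (c : ℕ) (w : Fin c → ℝ) (hw : ∀ i, 0 < w i)
    (T : ℝ)
    (W : ℝ) (hW : W = ∑ l : Fin c, w l)
    (τ : Fin c → ℝ) (hτ : ∀ i, τ i = 1 / w i)
    (Tsub : Fin c → ℝ) (hTsub : ∀ j, Tsub j = w j * T / W)
    (L : Fin c → Fin c → ℤ) (hL : ∀ i j, L i j = ⌈Tsub j / τ i⌉)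
    (s : Fin c → ℝ) (hs : ∀ j, s j = ∑ i : Fin c, (w i / w j) * (L i j : ℝ) * τ i)
    (j : Fin c) :
    T ≤ s j ∧ s j < T + (c : ℝ) * τ j := by
  have hWpos : 0 < W := hW ▸ Finset.sum_pos (fun i _ => hw i) ⟨j, Finset.mem_univ j⟩
  set x : Fin c → ℝ := fun i => w i * (w j * T) / W with hx
  have hsj : s j * w j = ∑ i, (⌈x i⌉ : ℝ) := by
    rw [hs, Finset.sum_mul]
    refine Finset.sum_congr rfl fun i _ => ?_
    have hxi : Tsub j / τ i = x i := by rw [hTsub, hτ, hx]; field_simp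
    rw [hL, hxi, hτ]
    field_simp [(hw i).ne', (hw j).ne']
  have hsumx : ∑ i, x i = w j * T := by
    rw [hx, hW]; exact Finset.sum_mul_div_sum_self _ _ _ (hW ▸ hWpos.ne')
  have hτj : (c : ℝ) * τ j * w j = c := by rw [hτ]; field_simp [(hw j).ne']
  have hlower := Finset.sum_le_sum_ceil Finset.univ x
  have hupper := Finset.sum_ceil_lt_sum_add_card Finset.univ x ⟨j, Finset.mem_univ j⟩
  rw [← hsj, hsumx] at hlower hupper
  constructor
  · exact le_of_mul_le_mul_right (by linarith) (hw j)
  · refine lt_of_mul_lt_mul_right ?_ (hw j).le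
    rw [add_mul, hτj]
    simpa [mul_comm] using hupper

/-- `c ≥ 1` channels with positive data rates `w i`, `W = ∑ w l`, `τ i = 1 / w i`,
sub-intervals `Tsub j = w j * T / W`, STS counts `L i j = ⌈Tsub j / τ i⌉`,
and simulation times `s j = ∑ i, (w i / w j) * L i j * τ i`.
Then for every channel `j` and every `T > 0` we have `T ≤ s j < T + c * τ j`. -/
theorem simulation_time_bounds
    (c : ℕ) (hc : 1 ≤ c) (w : Fin c → ℝ) (hw : ∀ i, 0 < w i)
    (T : ℝ) (hT : 0 < T)
    (W : ℝ) (hW : W = ∑ l : Fin c, w l)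
    (τ : Fin c → ℝ) (hτ : ∀ i, τ i = 1 / w i)
    (Tsub : Fin c → ℝ) (hTsub : ∀ j, Tsub j = w j * T / W)
    (L : Fin c → Fin c → ℤ) (hL : ∀ i j, L i j = ⌈Tsub j / τ i⌉)
    (s : Fin c → ℝ) (hs : ∀ j, s j = ∑ i : Fin c, (w i / w j) * (L i j : ℝ) * τ i)
    (j : Fin c) :
    T ≤ s j ∧ s j < T + (c : ℝ) * τ j :=
  simulation_time_bounds_general c w hw T W hW τ hτ Tsub hTsub L hL s hs j
end

section
/- For every T > 0, the quantity ŝ(T) := max_{1 ≤ j ≤ c} s_j satisfies T ≤ ŝ(T) < T + c·max_{1 ≤ j ≤ c} τ_j. -/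
/-!
Channel `j` simulates `⌈w i * w j * T / W⌉` transmissions of each channel `i`, one per time
unit `1 / w j`, so `s j = (∑ i, ⌈x i⌉) / w j` with `∑ i, x i = w j * T`. Rounding each `x i`
up costs between `0` and (strictly) `1`, hence `T ≤ s j < T + c / w j`, and both bounds pass
to the maximum over `j`.
-/

open Finset

section CeilSum

variable {ι : Type*} [Fintype ι] (x : ι → ℝ)

theorem sum_le_sum_ceil : ∑ i, x i ≤ ∑ i, (⌈x i⌉ : ℝ) :=
  sum_le_sum fun i _ => Int.le_ceil (x i)

theorem sum_ceil_lt_sum_add_card [Nonempty ι] :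
    ∑ i, (⌈x i⌉ : ℝ) < ∑ i, x i + Fintype.card ι :=
  calc ∑ i, (⌈x i⌉ : ℝ) < ∑ i, (x i + 1) :=
        sum_lt_sum_of_nonempty univ_nonempty fun i _ => Int.ceil_lt_add_one (x i)
    _ = ∑ i, x i + Fintype.card ι := by simp [sum_add_distrib]

end CeilSum

section SimulationTime

variable {ι : Type*} [Fintype ι] {w : ι → ℝ} (hw : ∀ i, 0 < w i) (T : ℝ)

/-- The paper's `s j`, with `τ i = 1 / w i`, `T_j = w j * T / W` and `L i j = ⌈T_j / τ i⌉`. -/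
noncomputable def simulationTime (w : ι → ℝ) (T : ℝ) (j : ι) : ℝ :=
  ∑ i, (w i / w j) * (⌈(w j * T / ∑ l, w l) / (1 / w i)⌉ : ℝ) * (1 / w i)

include hw

theorem simulationTime_eq (j : ι) :
    simulationTime w T j = (∑ i, (⌈w i * w j * T / ∑ l, w l⌉ : ℝ)) / w j := by
  rw [simulationTime, sum_div]
  refine sum_congr rfl fun i _ => ?_
  have hwi := (hw i).ne'
  have hwj := (hw j).ne'
  have hceil : (w j * T / ∑ l, w l) / (1 / w i) = w i * w j * T / ∑ l, w l := by
    field_simp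
  rw [hceil]
  field_simp

theorem sum_mul_div_sum_weights [Nonempty ι] (j : ι) :
    ∑ i, w i * w j * T / ∑ l, w l = w j * T := by
  have hW : 0 < ∑ l, w l := sum_pos (fun i _ => hw i) univ_nonempty
  rw [← sum_div, ← sum_mul, ← sum_mul]
  field_simp

theorem le_simulationTime [Nonempty ι] (j : ι) : T ≤ simulationTime w T j := by
  rw [simulationTime_eq hw, le_div_iff₀ (hw j), mul_comm, ← sum_mul_div_sum_weights hw T j]
  exact sum_le_sum_ceil _

theorem simulationTime_lt [Nonempty ι] (j : ι) :
    simulationTime w T j < T + Fintype.card ι * (1 / w j) := by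
  have hwj := hw j
  rw [simulationTime_eq hw, div_lt_iff₀ hwj]
  calc ∑ i, (⌈w i * w j * T / ∑ l, w l⌉ : ℝ)
      < ∑ i, w i * w j * T / ∑ l, w l + Fintype.card ι := sum_ceil_lt_sum_add_card _
    _ = (T + Fintype.card ι * (1 / w j)) * w j := by
      rw [sum_mul_div_sum_weights hw T j]
      field_simp

end SimulationTime

theorem max_simulation_time_bounds_general
    (c : ℕ) (hc : 1 ≤ c) (w : Fin c → ℝ) (hw : ∀ i, 0 < w i)
    (T : ℝ)
    (W : ℝ) (hW : W = ∑ l : Fin c, w l)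
    (τ : Fin c → ℝ) (hτ : ∀ i, τ i = 1 / w i)
    (Tsub : Fin c → ℝ) (hTsub : ∀ j, Tsub j = w j * T / W)
    (L : Fin c → Fin c → ℤ) (hL : ∀ i j, L i j = ⌈Tsub j / τ i⌉)
    (s : Fin c → ℝ) (hs : ∀ j, s j = ∑ i : Fin c, (w i / w j) * (L i j : ℝ) * τ i)
    (shat : ℝ)
    (hshat : shat = Finset.univ.sup' (Finset.univ_nonempty_iff.mpr ⟨⟨0, hc⟩⟩) s) :
    T ≤ shat ∧
      shat < T + (c : ℝ) * Finset.univ.sup' (Finset.univ_nonempty_iff.mpr ⟨⟨0, hc⟩⟩) τ := by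
  have : Nonempty (Fin c) := ⟨⟨0, hc⟩⟩
  have hs' : s = simulationTime w T :=
    funext fun j => by simp only [hs, hL, hTsub, hτ, hW, simulationTime]
  subst hshat hs'
  constructor
  · exact (le_simulationTime hw T ⟨0, hc⟩).trans (le_sup' _ (mem_univ _))
  · refine (sup'_lt_iff _).2 fun j _ => ?_
    calc simulationTime w T j < T + c * τ j := by
          simpa [hτ] using simulationTime_lt hw T j
      _ ≤ _ := by gcongr; exact le_sup' τ (mem_univ j)

/-- With `c ≥ 1` channels of positive data rates `w i`, `W = ∑ w l`, `τ i = 1 / w i`,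
`Tsub j = w j * T / W`, `L i j = ⌈Tsub j / τ i⌉`,
`s j = ∑ i, (w i / w j) * L i j * τ i`, and `ŝ = max_{1 ≤ j ≤ c} s j`,
for every `T > 0` we have `T ≤ ŝ < T + c * max_{1 ≤ j ≤ c} τ j`. -/
theorem max_simulation_time_bounds
    (c : ℕ) (hc : 1 ≤ c) (w : Fin c → ℝ) (hw : ∀ i, 0 < w i)
    (T : ℝ) (hT : 0 < T)
    (W : ℝ) (hW : W = ∑ l : Fin c, w l)
    (τ : Fin c → ℝ) (hτ : ∀ i, τ i = 1 / w i)
    (Tsub : Fin c → ℝ) (hTsub : ∀ j, Tsub j = w j * T / W)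
    (L : Fin c → Fin c → ℤ) (hL : ∀ i j, L i j = ⌈Tsub j / τ i⌉)
    (s : Fin c → ℝ) (hs : ∀ j, s j = ∑ i : Fin c, (w i / w j) * (L i j : ℝ) * τ i)
    (shat : ℝ)
    (hshat : shat = Finset.univ.sup' (Finset.univ_nonempty_iff.mpr ⟨⟨0, hc⟩⟩) s) :
    T ≤ shat ∧
      shat < T + (c : ℝ) * Finset.univ.sup' (Finset.univ_nonempty_iff.mpr ⟨⟨0, hc⟩⟩) τ :=
  max_simulation_time_bounds_general c hc w hw T W hW τ hτ Tsub hTsub L hL s hs shat hshat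
end
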